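/- The range space (𝒟, H_=) has constant (finite) VC dimension: there exists n₀ ∈ ℕ such that every finite set of closed disks shattered by H_= = {𝒟(h_=) : h a circle} has cardinality at most n₀. -/

import Mathlib

noncomputable section

/-- The ground set `𝒟` of closed disks in the plane: pairs `(center, radius)`
with radius `≥ 0`. -/
def Ddisks : Set (EuclideanSpace ℝ (Fin 2) × ℝ) := {d | 0 ≤ d.2}

/-- `𝒟(h_≥)` for the circle `h = (q, s)`. -/
def Dge (q : EuclideanSpace ℝ (Fin 2)) (s : ℝ) : Set (EuclideanSpace ℝ (Fin 2) × ℝ) :=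
  {d | d ∈ Ddisks ∧ s ≤ dist d.1 q + d.2}

/-- `𝒟(h_≤)` for the circle `h = (q, s)`. -/
def Dle (q : EuclideanSpace ℝ (Fin 2)) (s : ℝ) : Set (EuclideanSpace ℝ (Fin 2) × ℝ) :=
  {d | d ∈ Ddisks ∧ dist d.1 q - d.2 ≤ s}

/-- `𝒟(h_=) = 𝒟(h_≤) ∩ 𝒟(h_≥)`: the disks intersecting the boundary circle of `h`. -/
def Deq (q : EuclideanSpace ℝ (Fin 2)) (s : ℝ) : Set (EuclideanSpace ℝ (Fin 2) × ℝ) :=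
  Dle q s ∩ Dge q s

/-- The family `H_= = {𝒟(h_=) : h a circle}`. -/
def Heq : Set (Set (EuclideanSpace ℝ (Fin 2) × ℝ)) :=
  {f | ∃ q s, 0 < s ∧ f = Deq q s}

/-- A family `F` of subsets of a ground set shatters `Y` if every subset of `Y` is
cut out by some member of `F`. -/
def Shatters {X : Type*} (F : Set (Set X)) (Y : Set X) : Prop :=
  ∀ S ⊆ Y, ∃ f ∈ F, f ∩ Y = S

/-!
Squaring the two inequalities that define `𝒟(h_=)`, a disk `(p, r)` meets the circle `(q, s)`
iff `A ≤ 0 ∧ (B ≤ 0 ∨ C ≤ 0)` with `A = dist(p, q)² - (s + r)²`, `B = s - r` and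
`C = (s - r)² - dist(p, q)²`. Each of `A, B, C` is the pairing of the lifted circle
`(q₀, q₁, s, |q|² - s², 1) ∈ ℝ⁵` with one of three points of `ℝ⁵` determined by the disk. Hence if
`H_=` shatters `n` disks, homogeneous halfspaces of `ℝ⁵` cut out at least `2ⁿ` distinct subsets of
the `3n` lifted points. Homogeneous halfspaces of `ℝ⁵` shatter no `6` points (Radon), so by the
Sauer–Shelah lemma they cut out at most `∑_{k ≤ 5} (3n choose k) = O(n⁵)` subsets, which bounds `n`.
-/

open scoped Finset

theorem Finset.card_le_sum_choose_of_vcDim_le {α : Type*} [DecidableEq α]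
    {𝒜 : Finset (Finset α)} {G : Finset α} {d : ℕ} (hG : ∀ u ∈ 𝒜, u ⊆ G) (hd : 𝒜.vcDim ≤ d) :
    #𝒜 ≤ ∑ k ∈ Finset.range (d + 1), (#G).choose k := by
  have hshatterer : 𝒜.shatterer ⊆ (Finset.range (d + 1)).biUnion G.powersetCard := by
    intro s hs
    rw [Finset.mem_shatterer] at hs
    obtain ⟨u, hu, hsu⟩ := hs.exists_superset
    exact Finset.mem_biUnion.2 ⟨#s,
      Finset.mem_range.2 (Nat.lt_succ_of_le (hs.card_le_vcDim.trans hd)),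
      Finset.mem_powersetCard.2 ⟨hsu.trans (hG u hu), rfl⟩⟩
  calc #𝒜 ≤ #𝒜.shatterer := Finset.card_le_card_shatterer 𝒜
    _ ≤ #((Finset.range (d + 1)).biUnion G.powersetCard) := Finset.card_le_card hshatterer
    _ ≤ ∑ k ∈ Finset.range (d + 1), #(G.powersetCard k) := Finset.card_biUnion_le
    _ = ∑ k ∈ Finset.range (d + 1), (#G).choose k := by simp only [Finset.card_powersetCard]

section Halfspaces

variable {α V : Type*} [AddCommGroup V] [Module ℝ V]

open scoped Classical in
def halfspaceTraces (ν : α → V) (G : Finset α) : Finset (Finset α) :=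
  {u ∈ G.powerset | ∃ f : Module.Dual ℝ V, u = {a ∈ G | f (ν a) ≤ 0}}

theorem mem_halfspaceTraces {ν : α → V} {G u : Finset α} :
    u ∈ halfspaceTraces ν G ↔ u ⊆ G ∧ ∃ f : Module.Dual ℝ V, u = {a ∈ G | f (ν a) ≤ 0} := by
  classical
  simp only [halfspaceTraces, Finset.mem_filter, Finset.mem_powerset]

variable [FiniteDimensional ℝ V]

theorem exists_sum_smul_eq_zero_of_finrank_lt_card (ν : α → V) {s : Finset α}
    (hs : Module.finrank ℝ V < #s) : ∃ c : α → ℝ, ∑ a ∈ s, c a • ν a = 0 ∧ ∃ a ∈ s, 0 < c a := by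
  have hdep : ¬ LinearIndepOn ℝ ν (s : Set α) := fun h ↦
    hs.not_ge (by simpa using LinearIndependent.fintype_card_le_finrank h)
  rw [linearIndepOn_finset_iff] at hdep
  push Not at hdep
  obtain ⟨c, hsum, a, ha, hca⟩ := hdep
  rcases hca.lt_or_gt with hneg | hpos
  · exact ⟨-c, by simp [neg_smul, hsum], a, ha, by simpa using hneg⟩
  · exact ⟨c, hsum, a, ha, hpos⟩

/-- Radon's argument: split a linear relation among the `ν a` by the signs of its coefficients. -/
theorem Finset.Shatters.card_le_finrank [DecidableEq α] (ν : α → V) {𝒜 : Finset (Finset α)}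
    {s : Finset α} (hs : 𝒜.Shatters s)
    (h𝒜 : ∀ u ∈ 𝒜, ∃ f : Module.Dual ℝ V, ∀ a ∈ s, a ∈ u ↔ f (ν a) ≤ 0) :
    #s ≤ Module.finrank ℝ V := by
  by_contra! hlt
  obtain ⟨c, hsum, a₀, ha₀, hca₀⟩ := exists_sum_smul_eq_zero_of_finrank_lt_card ν hlt
  obtain ⟨u, hu, hsu⟩ := hs (Finset.filter_subset (fun a ↦ c a < 0) s)
  obtain ⟨f, hf⟩ := h𝒜 u hu
  have hsign : ∀ a ∈ s, f (ν a) ≤ 0 ↔ c a < 0 := fun a ha ↦ by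
    rw [← hf a ha]
    simpa [ha] using congrArg (a ∈ ·) hsu
  have hterm : ∀ a ∈ s, 0 ≤ c a * f (ν a) := fun a ha ↦ by
    by_cases hfa : f (ν a) ≤ 0
    · exact mul_nonneg_of_nonpos_of_nonpos ((hsign a ha).1 hfa).le hfa
    · exact mul_nonneg (not_lt.1 (mt (hsign a ha).2 hfa)) (not_le.1 hfa).le
  have hterm₀ : 0 < c a₀ * f (ν a₀) :=
    mul_pos hca₀ (not_le.1 fun h ↦ ((hsign a₀ ha₀).1 h).not_gt hca₀)
  have hzero : ∑ a ∈ s, c a * f (ν a) = 0 := by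
    simpa [map_sum, map_smul] using congrArg f hsum
  exact (Finset.sum_pos' hterm ⟨a₀, ha₀, hterm₀⟩).ne' hzero

theorem vcDim_halfspaceTraces_le [DecidableEq α] (ν : α → V) (G : Finset α) :
    (halfspaceTraces ν G).vcDim ≤ Module.finrank ℝ V := by
  refine Finset.sup_le fun s hs ↦ ?_
  rw [Finset.mem_shatterer] at hs
  obtain ⟨u₀, hu₀, hsu₀⟩ := hs.exists_superset
  refine hs.card_le_finrank ν fun u hu ↦ ?_
  obtain ⟨f, rfl⟩ := (mem_halfspaceTraces.1 hu).2
  have hsG : s ⊆ G := hsu₀.trans (mem_halfspaceTraces.1 hu₀).1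
  exact ⟨f, fun a ha ↦ by simp [Finset.mem_filter, hsG ha]⟩

theorem card_halfspaceTraces_le [DecidableEq α] (ν : α → V) (G : Finset α) :
    #(halfspaceTraces ν G) ≤ ∑ k ∈ Finset.range (Module.finrank ℝ V + 1), (#G).choose k :=
  Finset.card_le_sum_choose_of_vcDim_le (fun _ hu ↦ (mem_halfspaceTraces.1 hu).1)
    (vcDim_halfspaceTraces_le ν G)

end Halfspaces

theorem exists_le_of_two_pow_le_sum_choose (m d : ℕ) :
    ∃ N, ∀ n, 2 ^ n ≤ ∑ k ∈ Finset.range (d + 1), (n * m).choose k → n ≤ N := by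
  set C : ℝ := (d + 1) * (m + 1) ^ d
  have hC : ∀ᶠ n : ℕ in Filter.atTop, C * ((n : ℝ) ^ d / 2 ^ n) < 1 := by
    have := (tendsto_pow_const_div_const_pow_of_one_lt d one_lt_two).const_mul C
    rw [mul_zero] at this
    exact this.eventually (gt_mem_nhds one_pos)
  obtain ⟨N, hN⟩ := Filter.eventually_atTop.1 hC
  refine ⟨N, fun n hn ↦ ?_⟩
  by_contra! hNn
  have hpoly : ∑ k ∈ Finset.range (d + 1), (n * m).choose k ≤ (d + 1) * ((m + 1) * n) ^ d := by
    have hterm : ∀ k ∈ Finset.range (d + 1), (n * m).choose k ≤ ((m + 1) * n) ^ d := by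
      intro k hk
      calc (n * m).choose k ≤ (n * m) ^ k := Nat.choose_le_pow _ _
        _ ≤ ((m + 1) * n) ^ k := Nat.pow_le_pow_left (by nlinarith) k
        _ ≤ ((m + 1) * n) ^ d :=
          Nat.pow_le_pow_right (Nat.mul_pos m.succ_pos (by omega))
            (Nat.lt_succ_iff.1 (Finset.mem_range.1 hk))
    simpa using Finset.sum_le_sum hterm
  have hreal : (2 : ℝ) ^ n ≤ C * n ^ d := by
    have := (Nat.cast_le (α := ℝ)).2 (hn.trans hpoly)
    push_cast at this
    linarith [show C * (n : ℝ) ^ d = (d + 1) * ((m + 1) * n) ^ d by rw [mul_pow]; ring]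
  have := hN n hNn.le
  rw [mul_div_assoc', div_lt_one (by positivity)] at this
  linarith

section Disks

open Matrix

local notation "ℝ²" => EuclideanSpace ℝ (Fin 2)

def circleLift (q : ℝ²) (s : ℝ) : Fin 5 → ℝ :=
  ![q 0, q 1, s, q 0 ^ 2 + q 1 ^ 2 - s ^ 2, 1]

def diskLift (d : ℝ² × ℝ) : Fin 3 → Fin 5 → ℝ :=
  ![![-2 * d.1 0, -2 * d.1 1, -2 * d.2, 1, d.1 0 ^ 2 + d.1 1 ^ 2 - d.2 ^ 2],
    ![0, 0, 1, 0, -d.2],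
    ![2 * d.1 0, 2 * d.1 1, -2 * d.2, -1, d.2 ^ 2 - d.1 0 ^ 2 - d.1 1 ^ 2]]

theorem EuclideanSpace.dist_sq_fin_two (p q : ℝ²) :
    dist p q ^ 2 = (p 0 - q 0) ^ 2 + (p 1 - q 1) ^ 2 := by
  rw [EuclideanSpace.dist_eq, Real.sq_sqrt (by positivity), Fin.sum_univ_two,
    Real.dist_eq, Real.dist_eq, sq_abs, sq_abs]

variable (q : ℝ²) (s : ℝ) (d : ℝ² × ℝ)

theorem circleLift_dotProduct_diskLift_zero :
    circleLift q s ⬝ᵥ diskLift d 0 = dist d.1 q ^ 2 - (s + d.2) ^ 2 := by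
  simp [circleLift, diskLift, dotProduct, Fin.sum_univ_five, EuclideanSpace.dist_sq_fin_two]
  ring

theorem circleLift_dotProduct_diskLift_one : circleLift q s ⬝ᵥ diskLift d 1 = s - d.2 := by
  simp [circleLift, diskLift, dotProduct, Fin.sum_univ_five]
  ring

theorem circleLift_dotProduct_diskLift_two :
    circleLift q s ⬝ᵥ diskLift d 2 = (s - d.2) ^ 2 - dist d.1 q ^ 2 := by
  simp [circleLift, diskLift, dotProduct, Fin.sum_univ_five, EuclideanSpace.dist_sq_fin_two]
  ring

variable {q s d}

theorem mem_Deq_iff_sq (hd : 0 ≤ d.2) (hs : 0 < s) :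
    d ∈ Deq q s ↔ dist d.1 q ^ 2 ≤ (s + d.2) ^ 2 ∧ (s ≤ d.2 ∨ (s - d.2) ^ 2 ≤ dist d.1 q ^ 2) := by
  have hdist : 0 ≤ dist d.1 q := dist_nonneg
  simp only [Deq, Dle, Dge, Ddisks, Set.mem_inter_iff, Set.mem_ofPred_eq, hd, true_and]
  rw [sub_le_iff_le_add, ← sub_le_iff_le_add, sq_le_sq₀ hdist (by linarith)]
  constructor
  · rintro ⟨hle, hge⟩
    refine ⟨by linarith, (le_or_gt s d.2).imp_right fun hlt ↦ ?_⟩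
    exact (sq_le_sq₀ (by linarith) hdist).2 (by linarith)
  · rintro ⟨hle, hge | hge⟩
    · exact ⟨by linarith, by linarith⟩
    · exact ⟨by linarith, by nlinarith⟩

theorem mem_Deq_iff_circleLift_dotProduct_diskLift (hd : 0 ≤ d.2) (hs : 0 < s) :
    d ∈ Deq q s ↔ circleLift q s ⬝ᵥ diskLift d 0 ≤ 0 ∧
      (circleLift q s ⬝ᵥ diskLift d 1 ≤ 0 ∨ circleLift q s ⬝ᵥ diskLift d 2 ≤ 0) := by
  rw [mem_Deq_iff_sq hd hs, circleLift_dotProduct_diskLift_zero,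
    circleLift_dotProduct_diskLift_one, circleLift_dotProduct_diskLift_two]
  simp only [sub_nonpos]

open scoped Classical in
def decodeLiftTrace (Z : Finset (ℝ² × ℝ))
    (u : Finset ((ℝ² × ℝ) × Fin 3)) :
    Finset (ℝ² × ℝ) :=
  {d ∈ Z | (d, 0) ∈ u ∧ ((d, 1) ∈ u ∨ (d, 2) ∈ u)}

theorem mem_decodeLiftTrace {Z : Finset (ℝ² × ℝ)}
    {u : Finset ((ℝ² × ℝ) × Fin 3)} {d : ℝ² × ℝ} :
    d ∈ decodeLiftTrace Z u ↔ d ∈ Z ∧ (d, 0) ∈ u ∧ ((d, 1) ∈ u ∨ (d, 2) ∈ u) := by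
  classical
  simp only [decodeLiftTrace, Finset.mem_filter]

theorem surjOn_decodeLiftTrace {Z : Finset (ℝ² × ℝ)}
    (hZ : ↑Z ⊆ Ddisks) (hshatters : Shatters Heq ↑Z) :
    Set.SurjOn (decodeLiftTrace Z)
      ↑(halfspaceTraces (Function.uncurry diskLift) (Z ×ˢ (Finset.univ : Finset (Fin 3))))
      ↑Z.powerset := by
  intro S hS
  obtain ⟨_, ⟨q, s, hs, rfl⟩, hSZ⟩ := hshatters S (by simpa using hS)
  set f := dotProductEquiv ℝ (Fin 5) (circleLift q s)
  refine ⟨{a ∈ Z ×ˢ (Finset.univ : Finset (Fin 3)) | f (Function.uncurry diskLift a) ≤ 0},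
    mem_halfspaceTraces.2 ⟨Finset.filter_subset _ _, f, rfl⟩, ?_⟩
  ext d
  have hmem : d ∈ S ↔ d ∈ Z ∧ d ∈ Deq q s := by
    rw [← Finset.mem_coe, ← hSZ, Set.mem_inter_iff, Finset.mem_coe, and_comm]
  rw [mem_decodeLiftTrace, hmem]
  refine and_congr_right fun hd ↦ ?_
  rw [mem_Deq_iff_circleLift_dotProduct_diskLift (hZ hd) hs]
  simp [f, hd]

theorem two_pow_card_le_sum_choose_of_shatters {Z : Finset (ℝ² × ℝ)}
    (hZ : ↑Z ⊆ Ddisks) (hshatters : Shatters Heq ↑Z) :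
    2 ^ #Z ≤ ∑ k ∈ Finset.range (5 + 1), (#Z * 3).choose k := by
  calc 2 ^ #Z = #Z.powerset := (Finset.card_powerset Z).symm
    _ ≤ #(halfspaceTraces (Function.uncurry diskLift) (Z ×ˢ (Finset.univ : Finset (Fin 3)))) :=
      Finset.card_le_card_of_surjOn _ (surjOn_decodeLiftTrace hZ hshatters)
    _ ≤ ∑ k ∈ Finset.range (5 + 1), (#Z * 3).choose k := by
      classical
      simpa using card_halfspaceTraces_le (Function.uncurry diskLift) (Z ×ˢ Finset.univ)

end Disks

/-- The range space `(𝒟, H_=)` has constant (finite) VC dimension: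
there is `n₀ ∈ ℕ` such that every finite set of closed disks shattered by `H_=` has
cardinality at most `n₀`. -/
theorem vc_dim_Heq_finite :
    ∃ n₀ : ℕ, ∀ Y ⊆ Ddisks, Y.Finite → Shatters Heq Y → Y.ncard ≤ n₀ := by
  obtain ⟨N, hN⟩ := exists_le_of_two_pow_le_sum_choose 3 5
  refine ⟨N, fun Y hY hfin hshatters ↦ ?_⟩
  lift Y to Finset (EuclideanSpace ℝ (Fin 2) × ℝ) using hfin
  rw [Set.ncard_coe_finset]
  exact hN _ (two_pow_card_le_sum_choose_of_shatters hY hshatters)
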